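/- arXiv:2502.20308 — 7 statements merged into one kernel-verified Lean document; each statement's English description precedes it below -/
import Mathlib

section
/- For every real number x > 0 and every p > 1, the inequality x·|log x| ≤ 4·x^{3/4} + x^p/(2(p-1)) holds. -/
lemma log_le_half (y : ℝ) (hy : 0 < y) : Real.log y ≤ y / 2 := by
  have h1 : Real.log y = 2 * Real.log (Real.sqrt y) := by
    rw [Real.log_sqrt hy.le]; ring
  have h2 : Real.log (Real.sqrt y) ≤ Real.sqrt y - 1 :=
    Real.log_le_sub_one_of_pos (Real.sqrt_pos.mpr hy)
  have h3 : Real.sqrt y ^ 2 = y := Real.sq_sqrt hy.le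
  nlinarith [sq_nonneg (Real.sqrt y - 2)]

theorem mul_abs_log_le (x p : ℝ) (hx : 0 < x) (hp : 1 < p) :
    x * |Real.log x| ≤ 4 * x ^ ((3 : ℝ) / 4) + x ^ p / (2 * (p - 1)) := by
  have hq : 0 < p - 1 := by linarith
  rcases le_or_gt 1 x with h1 | h1
  · rw [abs_of_nonneg (Real.log_nonneg h1)]
    have h2 : Real.log (x ^ (p - 1)) ≤ x ^ (p - 1) / 2 :=
      log_le_half _ (Real.rpow_pos_of_pos hx _)
    rw [Real.log_rpow hx] at h2
    have hlog : Real.log x ≤ x ^ (p - 1) / (2 * (p - 1)) := by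
      rw [le_div_iff₀ (by positivity)]; nlinarith
    have hmul : x * Real.log x ≤ x * (x ^ (p - 1) / (2 * (p - 1))) :=
      mul_le_mul_of_nonneg_left hlog hx.le
    have hxp : x * x ^ (p - 1) = x ^ p := by
      rw [← Real.rpow_one_add' hx.le (by linarith)]; ring_nf
    have h34 : (0:ℝ) ≤ 4 * x ^ ((3:ℝ)/4) := by positivity
    calc x * Real.log x ≤ x * (x ^ (p - 1) / (2 * (p - 1))) := hmul
      _ = x ^ p / (2 * (p - 1)) := by rw [mul_div_assoc'] ; rw [hxp]
      _ ≤ 4 * x ^ ((3:ℝ)/4) + x ^ p / (2 * (p - 1)) := by linarith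
  · have hlx : Real.log x < 0 := Real.log_neg hx h1
    rw [abs_of_neg hlx]
    have h2 : Real.log (x ^ (-(1:ℝ)/4)) ≤ x ^ (-(1:ℝ)/4) - 1 :=
      Real.log_le_sub_one_of_pos (Real.rpow_pos_of_pos hx _)
    rw [Real.log_rpow hx] at h2
    have hneg : -Real.log x ≤ 4 * x ^ (-(1:ℝ)/4) := by nlinarith
    have hmul : x * -Real.log x ≤ x * (4 * x ^ (-(1:ℝ)/4)) :=
      mul_le_mul_of_nonneg_left hneg hx.le
    have hxp : x * x ^ (-(1:ℝ)/4) = x ^ ((3:ℝ)/4) := by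
      rw [← Real.rpow_one_add' hx.le (by norm_num)]; norm_num
    have hp' : (0:ℝ) ≤ x ^ p / (2 * (p - 1)) := by positivity
    calc x * -Real.log x ≤ x * (4 * x ^ (-(1:ℝ)/4)) := hmul
      _ = 4 * x ^ ((3:ℝ)/4) := by rw [show x * (4 * x ^ (-(1:ℝ)/4)) = 4 * (x * x ^ (-(1:ℝ)/4)) by ring, hxp]
      _ ≤ 4 * x ^ ((3:ℝ)/4) + x ^ p / (2 * (p - 1)) := by linarith
end

section
/- Define the Lebesgue bracket ⟨v,I⟩ = √(1 + |v|²/2 + I/m) for v ∈ ℝ³, I ≥ 0, m > 0, and E = (m/4)|v−v*|² + I + I*. Then (E/m)^{ζ/2} ≤ ⟨v,I⟩^ζ + ⟨v*,I*⟩^ζ for every ζ ∈ (0,2]. -/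
/-!
Since `‖v - v*‖² ≤ 2‖v‖² + 2‖v*‖²`, the quantity `E / m` is at most `⟨v,I⟩² + ⟨v*,I*⟩²`.
Raising to the power `ζ / 2 ∈ (0, 1]` is monotone and subadditive on `[0, ∞)`.
-/

lemma norm_sub_sq_le {E : Type*} [SeminormedAddGroup E] (x y : E) :
    ‖x - y‖ ^ 2 ≤ 2 * (‖x‖ ^ 2 + ‖y‖ ^ 2) :=
  (pow_le_pow_left₀ (norm_nonneg _) (norm_sub_le x y) 2).trans add_sq_le

lemma energy_div_le_add {E : Type*} [SeminormedAddGroup E] {m : ℝ} (hm : 0 < m)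
    (v vs : E) (I Is : ℝ) :
    (m / 4 * ‖v - vs‖ ^ 2 + I + Is) / m ≤
      (1 + ‖v‖ ^ 2 / 2 + I / m) + (1 + ‖vs‖ ^ 2 / 2 + Is / m) := by
  have hsplit : (m / 4 * ‖v - vs‖ ^ 2 + I + Is) / m = ‖v - vs‖ ^ 2 / 4 + I / m + Is / m := by
    field_simp
  linarith [norm_sub_sq_le v vs]

theorem energy_upper_bound
    (m : ℝ) (hm : 0 < m)
    (v vs : EuclideanSpace ℝ (Fin 3)) (I Is : ℝ) (hI : 0 ≤ I) (hIs : 0 ≤ Is)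
    (ζ : ℝ) (hζ : ζ ∈ Set.Ioc (0:ℝ) 2)
    (E : ℝ) (hE : E = m / 4 * ‖v - vs‖ ^ 2 + I + Is) :
    (E / m) ^ (ζ / 2) ≤
      Real.sqrt (1 + ‖v‖ ^ 2 / 2 + I / m) ^ ζ
        + Real.sqrt (1 + ‖vs‖ ^ 2 / 2 + Is / m) ^ ζ := by
  obtain ⟨hζ0, hζ2⟩ := hζ
  have ha : 0 ≤ 1 + ‖v‖ ^ 2 / 2 + I / m := by positivity
  have hb : 0 ≤ 1 + ‖vs‖ ^ 2 / 2 + Is / m := by positivity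
  rw [← Real.rpow_div_two_eq_sqrt ζ ha, ← Real.rpow_div_two_eq_sqrt ζ hb]
  subst hE
  calc ((m / 4 * ‖v - vs‖ ^ 2 + I + Is) / m) ^ (ζ / 2)
      ≤ ((1 + ‖v‖ ^ 2 / 2 + I / m) + (1 + ‖vs‖ ^ 2 / 2 + Is / m)) ^ (ζ / 2) :=
        Real.rpow_le_rpow (by positivity) (energy_div_le_add hm v vs I Is) (by linarith)
    _ ≤ _ := Real.rpow_add_le_add_rpow ha hb (by linarith) (by linarith)
end

section
/- Define the Lebesgue bracket ⟨v,I⟩ = √(1 + |v|²/2 + I/m) and E = (m/4)|v−v*|² + I + I*. Then for every ζ ∈ (0,2], the lower bound L·⟨v,I⟩^ζ − ⟨v*,I*⟩^ζ ≤ (E/m)^{ζ/2} holds with L = 2^{−ζ}·min{1, 2^{1−ζ}}. -/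
/-!
Since `‖v‖² ≤ 2‖v - v*‖² + 2‖v*‖²`, the squared bracket satisfies `⟨v,I⟩² ≤ 4 (E/m + ⟨v*,I*⟩²)`.
Raising this to the power `ζ/2 ∈ (0,1]` and using subadditivity of `t ↦ t^(ζ/2)` gives
`⟨v,I⟩^ζ ≤ 2^ζ ((E/m)^(ζ/2) + ⟨v*,I*⟩^ζ)`, which is the claim with the constant `2^(-ζ) ≥ L`.
-/

open Real

lemma norm_sq_le_two_mul_norm_sub_sq_add {F : Type*} [SeminormedAddCommGroup F] (v w : F) :
    ‖v‖ ^ 2 ≤ 2 * ‖v - w‖ ^ 2 + 2 * ‖w‖ ^ 2 :=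
  calc ‖v‖ ^ 2 ≤ (‖v - w‖ + ‖w‖) ^ 2 := by gcongr; exact norm_le_norm_sub_add v w
    _ ≤ 2 * ‖v - w‖ ^ 2 + 2 * ‖w‖ ^ 2 := by linarith [add_sq_le (a := ‖v - w‖) (b := ‖w‖)]

lemma bracket_sq_le_four_mul {F : Type*} [SeminormedAddCommGroup F] {m I Is : ℝ} (hm : 0 < m)
    (hI : 0 ≤ I) (hIs : 0 ≤ Is) (v vs : F) :
    1 + ‖v‖ ^ 2 / 2 + I / m ≤
      4 * ((m / 4 * ‖v - vs‖ ^ 2 + I + Is) / m + (1 + ‖vs‖ ^ 2 / 2 + Is / m)) := by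
  have hIm : 0 ≤ I / m := div_nonneg hI hm.le
  have hIsm : 0 ≤ Is / m := div_nonneg hIs hm.le
  have hE : (m / 4 * ‖v - vs‖ ^ 2 + I + Is) / m = ‖v - vs‖ ^ 2 / 4 + I / m + Is / m := by
    field_simp
  rw [hE]
  nlinarith [norm_sq_le_two_mul_norm_sub_sq_add v vs, sq_nonneg ‖vs‖]

lemma four_mul_rpow_half (x ζ : ℝ) (hx : 0 ≤ x) : (4 * x) ^ (ζ / 2) = 2 ^ ζ * x ^ (ζ / 2) := by
  have h4 : (4 : ℝ) = 2 ^ (2 : ℝ) := by norm_num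
  rw [mul_rpow (by norm_num) hx, h4, ← rpow_mul zero_le_two, mul_div_cancel₀ ζ two_ne_zero]

lemma two_rpow_neg_mul_rpow_half_sub_le {a b e ζ : ℝ} (ha : 0 ≤ a) (hb : 0 ≤ b) (he : 0 ≤ e)
    (hζ0 : 0 ≤ ζ) (hζ2 : ζ ≤ 2) (h : a ≤ 4 * (e + b)) :
    2 ^ (-ζ) * a ^ (ζ / 2) - b ^ (ζ / 2) ≤ e ^ (ζ / 2) := by
  have hsub : a ^ (ζ / 2) ≤ 2 ^ ζ * (e ^ (ζ / 2) + b ^ (ζ / 2)) :=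
    calc a ^ (ζ / 2) ≤ (4 * (e + b)) ^ (ζ / 2) := by gcongr
      _ = 2 ^ ζ * (e + b) ^ (ζ / 2) := four_mul_rpow_half _ _ (by positivity)
      _ ≤ 2 ^ ζ * (e ^ (ζ / 2) + b ^ (ζ / 2)) := by
        gcongr; exact rpow_add_le_add_rpow he hb (by linarith) (by linarith)
  have hcancel : (2 : ℝ) ^ (-ζ) * 2 ^ ζ = 1 := by rw [← rpow_add two_pos]; norm_num
  have := mul_le_mul_of_nonneg_left hsub (rpow_nonneg zero_le_two (-ζ))
  rw [← mul_assoc, hcancel, one_mul] at this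
  linarith

theorem energy_lower_bound
    (m : ℝ) (hm : 0 < m)
    (v vs : EuclideanSpace ℝ (Fin 3)) (I Is : ℝ) (hI : 0 ≤ I) (hIs : 0 ≤ Is)
    (ζ : ℝ) (hζ : ζ ∈ Set.Ioc (0:ℝ) 2)
    (E : ℝ) (hE : E = m / 4 * ‖v - vs‖ ^ 2 + I + Is)
    (L : ℝ) (hL : L = 2 ^ (-ζ) * min 1 (2 ^ (1 - ζ))) :
    L * Real.sqrt (1 + ‖v‖ ^ 2 / 2 + I / m) ^ ζ
        - Real.sqrt (1 + ‖vs‖ ^ 2 / 2 + Is / m) ^ ζ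
      ≤ (E / m) ^ (ζ / 2) := by
  obtain ⟨hζ0, hζ2⟩ := hζ
  subst hE hL
  have hIm : 0 ≤ I / m := div_nonneg hI hm.le
  have hIsm : 0 ≤ Is / m := div_nonneg hIs hm.le
  rw [← rpow_div_two_eq_sqrt _ (by positivity), ← rpow_div_two_eq_sqrt _ (by positivity)]
  have hL_le : 2 ^ (-ζ) * min 1 (2 ^ (1 - ζ)) ≤ (2 : ℝ) ^ (-ζ) :=
    mul_le_of_le_one_right (by positivity) (min_le_left _ _)
  calc 2 ^ (-ζ) * min 1 (2 ^ (1 - ζ)) * (1 + ‖v‖ ^ 2 / 2 + I / m) ^ (ζ / 2)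
        - (1 + ‖vs‖ ^ 2 / 2 + Is / m) ^ (ζ / 2)
      ≤ 2 ^ (-ζ) * (1 + ‖v‖ ^ 2 / 2 + I / m) ^ (ζ / 2)
        - (1 + ‖vs‖ ^ 2 / 2 + Is / m) ^ (ζ / 2) := by gcongr
    _ ≤ _ := two_rpow_neg_mul_rpow_half_sub_le (by positivity) (by positivity) (by positivity)
        hζ0.le hζ2 (bracket_sq_le_four_mul hm hI hIs v vs)
end

section
/- (Energy identity bound) Let v', v'*, I', I'* be given by the Borgnakke–Larsen rules with parameters r, R ∈ [0,1] and unit vector σ, and set E^⟨⟩ = ⟨v,I⟩² + ⟨v*,I*⟩², s = 1 − (1−R)E/(m·E^⟨⟩), V = (v+v*)/2. Then s ∈ [0,1] and ⟨v',I'⟩² ≤ E^⟨⟩·( r(1−s) + (s/2)(1 + |V̂·σ|) ) where V̂ = V/|V| (interpreting the bound as ⟨v',I'⟩² ≤ E^⟨⟩·(r(1−s) + s) when V = 0). -/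
open scoped Classical

/-! Splitting off the centre-of-mass velocity `V = (v + v*)/2`,
`‖v‖²/2 + ‖v*‖²/2 = ‖V‖² + ‖v - v*‖²/4`, so `E^⟨⟩ = 2 + ‖V‖² + E/m`. Hence
`E^⟨⟩ (1 - s) = (1 - R) E / m` and `E^⟨⟩ s = 2 + ‖V‖² + c²` with `c = √(RE/m)`: the internal
energy `I'/m = r E^⟨⟩ (1 - s)` cancels on both sides, and since `v' = V + c σ` the bound reduces to
`1 + ‖V + c σ‖²/2 ≤ (2 + ‖V‖² + c²) (1 + |V̂·σ|)/2`, which follows from `⟪V, σ⟫ ≤ ‖V‖ |V̂·σ|`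
and `2 ‖V‖ c ≤ ‖V‖² + c²`. -/

open RealInnerProductSpace

theorem mem_Icc_zero_one_of_mul_nonneg {a s : ℝ} (ha : 0 < a) (h₀ : 0 ≤ a * s)
    (h₁ : 0 ≤ a * (1 - s)) : s ∈ Set.Icc (0 : ℝ) 1 :=
  ⟨(mul_nonneg_iff_of_pos_left ha).mp h₀, sub_nonneg.mp ((mul_nonneg_iff_of_pos_left ha).mp h₁)⟩

section InnerProductSpace

variable {F : Type*} [NormedAddCommGroup F] [InnerProductSpace ℝ F]

theorem half_norm_sq_add_half_norm_sq (v w : F) :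
    ‖v‖ ^ 2 / 2 + ‖w‖ ^ 2 / 2 = ‖(1 / 2 : ℝ) • (v + w)‖ ^ 2 + ‖v - w‖ ^ 2 / 4 := by
  rw [norm_smul, mul_pow, norm_add_sq_real, norm_sub_sq_real]
  norm_num
  ring

theorem real_inner_le_norm_mul_abs_inner_normalize (V σ : F) :
    ⟪V, σ⟫ ≤ ‖V‖ * |⟪‖V‖⁻¹ • V, σ⟫| := by
  rcases eq_or_ne V 0 with rfl | hV
  · simp
  · rw [real_inner_smul_left, abs_mul, abs_inv, abs_norm,
      mul_inv_cancel_left₀ (norm_ne_zero_iff.mpr hV)]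
    exact le_abs_self _

theorem one_add_norm_add_smul_sq_div_two_le [DecidableEq F] {V σ : F} (hσ : ‖σ‖ = 1) {c : ℝ}
    (hc : 0 ≤ c) :
    1 + ‖V + c • σ‖ ^ 2 / 2 ≤
      (2 + ‖V‖ ^ 2 + c ^ 2) * (if V = 0 then 1 else (1 + |⟪‖V‖⁻¹ • V, σ⟫|) / 2) := by
  have hnorm : ‖V + c • σ‖ ^ 2 = ‖V‖ ^ 2 + 2 * c * ⟪V, σ⟫ + c ^ 2 := by
    rw [norm_add_sq_real, real_inner_smul_right, norm_smul, hσ, Real.norm_of_nonneg hc]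
    ring
  split_ifs with hV
  · rw [hnorm, hV]
    simp only [inner_zero_left, norm_zero]
    nlinarith
  · set u := |⟪‖V‖⁻¹ • V, σ⟫|
    have hu : 0 ≤ u := abs_nonneg _
    have hVσ : c * ⟪V, σ⟫ ≤ c * (‖V‖ * u) :=
      mul_le_mul_of_nonneg_left (real_inner_le_norm_mul_abs_inner_normalize V σ) hc
    have hAMGM : 2 * ‖V‖ * c ≤ ‖V‖ ^ 2 + c ^ 2 := two_mul_le_add_sq _ _
    rw [hnorm]
    nlinarith [mul_le_mul_of_nonneg_right hAMGM hu]

end InnerProductSpace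

theorem energy_identity_bound_general
    (m : ℝ) (hm : 0 < m)
    (v vs : EuclideanSpace ℝ (Fin 3)) (I Is : ℝ) (hI : 0 ≤ I) (hIs : 0 ≤ Is)
    (σ : EuclideanSpace ℝ (Fin 3)) (hσ : ‖σ‖ = 1)
    (r R : ℝ) (hR : R ∈ Set.Icc (0:ℝ) 1)
    (E : ℝ) (hE : E = m / 4 * ‖v - vs‖ ^ 2 + I + Is)
    (v' : EuclideanSpace ℝ (Fin 3)) (I' : ℝ)
    (hv' : v' = (1/2 : ℝ) • (v + vs) + Real.sqrt (R * E / m) • σ)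
    (hI' : I' = r * (1 - R) * E)
    (V : EuclideanSpace ℝ (Fin 3)) (hV : V = (1/2 : ℝ) • (v + vs))
    (Ebr : ℝ)
    (hEbr : Ebr = (1 + ‖v‖ ^ 2 / 2 + I / m) + (1 + ‖vs‖ ^ 2 / 2 + Is / m))
    (s : ℝ) (hs : s = 1 - (1 - R) * E / (m * Ebr)) :
    s ∈ Set.Icc (0:ℝ) 1 ∧
      1 + ‖v'‖ ^ 2 / 2 + I' / m ≤
        Ebr * (if V = 0 then r * (1 - s) + s
               else r * (1 - s) + s / 2 * (1 + |(inner ℝ (‖V‖⁻¹ • V) σ : ℝ)|)) := by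
  have hR0 : 0 ≤ R := hR.1
  have hR1 : 0 ≤ 1 - R := sub_nonneg.mpr hR.2
  have hE0 : 0 ≤ E := by rw [hE]; positivity
  have hRE : 0 ≤ R * E / m := by positivity
  have hEbr' : Ebr = 2 + ‖V‖ ^ 2 + E / m := by
    have hsplit := half_norm_sq_add_half_norm_sq v vs
    have hE_div : E / m = ‖v - vs‖ ^ 2 / 4 + I / m + Is / m := by
      rw [hE]
      field_simp
    rw [hEbr, hE_div, hV]
    linarith
  have hEbr0 : 0 < Ebr := by rw [hEbr']; positivity
  have hEbr_one_sub : Ebr * (1 - s) = (1 - R) * E / m := by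
    rw [hs]
    field_simp
    ring
  have hEbr_s : Ebr * s = 2 + ‖V‖ ^ 2 + R * E / m := by
    linear_combination hEbr' - hEbr_one_sub
  refine ⟨mem_Icc_zero_one_of_mul_nonneg hEbr0 (by rw [hEbr_s]; positivity)
    (by rw [hEbr_one_sub]; positivity), ?_⟩
  have key := one_add_norm_add_smul_sq_div_two_le (V := V) hσ (Real.sqrt_nonneg (R * E / m))
  have hv'V : v' = V + Real.sqrt (R * E / m) • σ := by rw [hv', hV]
  rw [Real.sq_sqrt hRE, ← hEbr_s, ← hv'V] at key
  have hI'_div : I' / m = r * (Ebr * (1 - s)) := by rw [hEbr_one_sub, hI']; ring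
  calc 1 + ‖v'‖ ^ 2 / 2 + I' / m
      ≤ Ebr * s * (if V = 0 then 1 else (1 + |⟪‖V‖⁻¹ • V, σ⟫|) / 2) + r * (Ebr * (1 - s)) := by
        linarith
    _ = _ := by split_ifs <;> ring

theorem energy_identity_bound
    (m : ℝ) (hm : 0 < m)
    (v vs : EuclideanSpace ℝ (Fin 3)) (I Is : ℝ) (hI : 0 ≤ I) (hIs : 0 ≤ Is)
    (σ : EuclideanSpace ℝ (Fin 3)) (hσ : ‖σ‖ = 1)
    (r R : ℝ) (hr : r ∈ Set.Icc (0:ℝ) 1) (hR : R ∈ Set.Icc (0:ℝ) 1)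
    (E : ℝ) (hE : E = m / 4 * ‖v - vs‖ ^ 2 + I + Is)
    (v' : EuclideanSpace ℝ (Fin 3)) (I' : ℝ)
    (hv' : v' = (1/2 : ℝ) • (v + vs) + Real.sqrt (R * E / m) • σ)
    (hI' : I' = r * (1 - R) * E)
    (V : EuclideanSpace ℝ (Fin 3)) (hV : V = (1/2 : ℝ) • (v + vs))
    (Ebr : ℝ)
    (hEbr : Ebr = (1 + ‖v‖ ^ 2 / 2 + I / m) + (1 + ‖vs‖ ^ 2 / 2 + Is / m))
    (s : ℝ) (hs : s = 1 - (1 - R) * E / (m * Ebr)) :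
    s ∈ Set.Icc (0:ℝ) 1 ∧
      1 + ‖v'‖ ^ 2 / 2 + I' / m ≤
        Ebr * (if V = 0 then r * (1 - s) + s
               else r * (1 - s) + s / 2 * (1 + |(inner ℝ (‖V‖⁻¹ • V) σ : ℝ)|)) :=
  energy_identity_bound_general m hm v vs I Is hI hIs σ hσ r R hR E hE v' I' hv' hI' V hV Ebr hEbr s
    hs
end

section
/- (Energy decomposition with transport term) With notation as in the Borgnakke–Larsen rules, there exists λ ∈ ℝ with |λ| ≤ s/2 such that ⟨v',I'⟩² = E^⟨⟩·( s/2 + r(1−s) + λ·(V̂·σ) ) and ⟨v'*,I'*⟩² = E^⟨⟩·( s/2 + (1−r)(1−s) − λ·(V̂·σ) ), where s = 1 − (1−R)E/(m·E^⟨⟩) and V̂ = V/|V| (when V ≠ 0; if V = 0 take λ = 0). -/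
/-!
Put `c = √(RE/m)`, so that `v' = V + cσ`, `v'* = V − cσ` and `|v'|²/2 = (|V|² + c²)/2 ± c V·σ`.
The parallelogram law gives `E^⟨⟩ = 2 + |V|² + E/m`, hence `E^⟨⟩ s = 2 + |V|² + c²` and
`E^⟨⟩ (1 − s) = (1 − R)E/m`; the two identities then hold with `λ = c|V| / E^⟨⟩`, and
`|λ| ≤ s/2` is `2c|V| ≤ |V|² + c²`.
-/

open scoped Classical

section InnerProductSpace

variable {F : Type*} [NormedAddCommGroup F] [InnerProductSpace ℝ F]

theorem norm_add_smul_sq_of_norm_eq_one {σ : F} (hσ : ‖σ‖ = 1) (V : F) (c : ℝ) :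
    ‖V + c • σ‖ ^ 2 = ‖V‖ ^ 2 + 2 * c * inner ℝ V σ + c ^ 2 := by
  rw [norm_add_sq_real, real_inner_smul_right, norm_smul, hσ, Real.norm_eq_abs, mul_one, sq_abs]
  ring

theorem norm_sub_smul_sq_of_norm_eq_one {σ : F} (hσ : ‖σ‖ = 1) (V : F) (c : ℝ) :
    ‖V - c • σ‖ ^ 2 = ‖V‖ ^ 2 - 2 * c * inner ℝ V σ + c ^ 2 := by
  rw [sub_eq_add_neg, ← neg_smul, norm_add_smul_sq_of_norm_eq_one hσ]
  ring

theorem norm_mul_ite_inner_inv_norm_smul (V σ : F) :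
    ‖V‖ * (if V = 0 then 0 else inner ℝ (‖V‖⁻¹ • V) σ) = inner ℝ V σ := by
  split_ifs with hV
  · simp [hV]
  · rw [real_inner_smul_left, mul_inv_cancel_left₀ (norm_ne_zero_iff.mpr hV)]

theorem norm_sq_add_norm_sq_eq_midpoint (v w : F) :
    ‖v‖ ^ 2 + ‖w‖ ^ 2 = 2 * ‖(1 / 2 : ℝ) • (v + w)‖ ^ 2 + ‖v - w‖ ^ 2 / 2 := by
  have h := parallelogram_law_with_norm ℝ v w
  rw [norm_smul, Real.norm_eq_abs, abs_of_pos (by norm_num : (0 : ℝ) < 1 / 2)]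
  linear_combination -h / 2

theorem bracket_add_bracket_eq {m : ℝ} (hm : m ≠ 0) (v w : F) (I J : ℝ) :
    (1 + ‖v‖ ^ 2 / 2 + I / m) + (1 + ‖w‖ ^ 2 / 2 + J / m)
      = 2 + ‖(1 / 2 : ℝ) • (v + w)‖ ^ 2 + (m / 4 * ‖v - w‖ ^ 2 + I + J) / m := by
  have hE : (m / 4 * ‖v - w‖ ^ 2 + I + J) / m = ‖v - w‖ ^ 2 / 4 + I / m + J / m := by
    field_simp
  rw [hE]
  linear_combination norm_sq_add_norm_sq_eq_midpoint v w / 2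

end InnerProductSpace

theorem energy_decomposition_general
    (m : ℝ) (hm : 0 < m)
    (v vs : EuclideanSpace ℝ (Fin 3)) (I Is : ℝ) (hI : 0 ≤ I) (hIs : 0 ≤ Is)
    (σ : EuclideanSpace ℝ (Fin 3)) (hσ : ‖σ‖ = 1)
    (r R : ℝ) (hR : R ∈ Set.Icc (0:ℝ) 1)
    (V : EuclideanSpace ℝ (Fin 3)) (hV : V = (1/2 : ℝ) • (v + vs))
    (E : ℝ) (hE : E = m / 4 * ‖v - vs‖ ^ 2 + I + Is)
    (v' vs' : EuclideanSpace ℝ (Fin 3)) (I' Is' : ℝ)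
    (hv' : v' = V + Real.sqrt (R * E / m) • σ)
    (hvs' : vs' = V - Real.sqrt (R * E / m) • σ)
    (hI' : I' = r * (1 - R) * E) (hIs' : Is' = (1 - r) * (1 - R) * E)
    (Ebr : ℝ)
    (hEbr : Ebr = (1 + ‖v‖ ^ 2 / 2 + I / m) + (1 + ‖vs‖ ^ 2 / 2 + Is / m))
    (s : ℝ) (hs : s = 1 - (1 - R) * E / (m * Ebr)) :
    ∃ lam : ℝ, |lam| ≤ s / 2 ∧ (V = 0 → lam = 0) ∧
      1 + ‖v'‖ ^ 2 / 2 + I' / m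
        = Ebr * (s / 2 + r * (1 - s)
            + lam * (if V = 0 then 0 else (inner ℝ (‖V‖⁻¹ • V) σ : ℝ))) ∧
      1 + ‖vs'‖ ^ 2 / 2 + Is' / m
        = Ebr * (s / 2 + (1 - r) * (1 - s)
            - lam * (if V = 0 then 0 else (inner ℝ (‖V‖⁻¹ • V) σ : ℝ))) := by
  have hE0 : 0 ≤ E := by rw [hE]; positivity
  set c := Real.sqrt (R * E / m)
  have hc : c ^ 2 = R * E / m := Real.sq_sqrt (by have := hR.1; positivity)
  have hEbrV : Ebr = 2 + ‖V‖ ^ 2 + E / m := by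
    rw [hEbr, hV, hE]; exact bracket_add_bracket_eq hm.ne' v vs I Is
  have hEbr0 : 0 < Ebr := by rw [hEbrV]; positivity
  have hEbr_one_sub_s : Ebr * (1 - s) = (1 - R) * E / m := by rw [hs]; field_simp; ring
  have hEbr_s : Ebr * s = 2 + ‖V‖ ^ 2 + c ^ 2 := by
    linear_combination hEbrV - hEbr_one_sub_s - hc
  have htransport : Ebr * (c * ‖V‖ / Ebr * (if V = 0 then 0 else inner ℝ (‖V‖⁻¹ • V) σ))
      = c * inner ℝ V σ := by
    rw [← norm_mul_ite_inner_inv_norm_smul V σ]; field_simp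
  refine ⟨c * ‖V‖ / Ebr, ?_, fun h => by simp [h], ?_, ?_⟩
  · rw [abs_of_nonneg (by positivity), div_le_iff₀ hEbr0]
    nlinarith [sq_nonneg (c - ‖V‖)]
  · rw [hv', norm_add_smul_sq_of_norm_eq_one hσ, hI']
    linear_combination -hEbr_s / 2 - r * hEbr_one_sub_s - htransport
  · rw [hvs', norm_sub_smul_sq_of_norm_eq_one hσ, hIs']
    linear_combination -hEbr_s / 2 - (1 - r) * hEbr_one_sub_s + htransport

theorem energy_decomposition
    (m : ℝ) (hm : 0 < m)
    (v vs : EuclideanSpace ℝ (Fin 3)) (I Is : ℝ) (hI : 0 ≤ I) (hIs : 0 ≤ Is)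
    (σ : EuclideanSpace ℝ (Fin 3)) (hσ : ‖σ‖ = 1)
    (r R : ℝ) (hr : r ∈ Set.Icc (0:ℝ) 1) (hR : R ∈ Set.Icc (0:ℝ) 1)
    (V : EuclideanSpace ℝ (Fin 3)) (hV : V = (1/2 : ℝ) • (v + vs))
    (E : ℝ) (hE : E = m / 4 * ‖v - vs‖ ^ 2 + I + Is)
    (v' vs' : EuclideanSpace ℝ (Fin 3)) (I' Is' : ℝ)
    (hv' : v' = V + Real.sqrt (R * E / m) • σ)
    (hvs' : vs' = V - Real.sqrt (R * E / m) • σ)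
    (hI' : I' = r * (1 - R) * E) (hIs' : Is' = (1 - r) * (1 - R) * E)
    (Ebr : ℝ)
    (hEbr : Ebr = (1 + ‖v‖ ^ 2 / 2 + I / m) + (1 + ‖vs‖ ^ 2 / 2 + Is / m))
    (s : ℝ) (hs : s = 1 - (1 - R) * E / (m * Ebr)) :
    ∃ lam : ℝ, |lam| ≤ s / 2 ∧ (V = 0 → lam = 0) ∧
      1 + ‖v'‖ ^ 2 / 2 + I' / m
        = Ebr * (s / 2 + r * (1 - s)
            + lam * (if V = 0 then 0 else (inner ℝ (‖V‖⁻¹ • V) σ : ℝ))) ∧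
      1 + ‖vs'‖ ^ 2 / 2 + Is' / m
        = Ebr * (s / 2 + (1 - r) * (1 - s)
            - lam * (if V = 0 then 0 else (inner ℝ (‖V‖⁻¹ • V) σ : ℝ))) :=
  energy_decomposition_general m hm v vs I Is hI hIs σ hσ r R hR V hV E hE v' vs' I' Is' hv' hvs'
    hI' hIs' Ebr hEbr s hs
end

section
/- (Truncation estimate via entropy) Let g ≥ 0 on a measure space with weight w ≥ 1, and suppose ∫ g·w^{k+ζ+1} dμ = M < ∞ and ∫ g·|log(g̃)| dμ + (ℓ/2)∫ g·w² dμ = H < ∞ where g̃ is measurable with g̃ > 0 and g·1_{g̃ w^ℓ ≥ K} ≤ g for some ℓ > 0, K > 1. Setting s = k+ζ+1, one has ∫ g·w^{k+ζ}·1_{g̃ w^ℓ ≥ K} dμ ≤ (log K)^{−1/s} · M^{(s−1)/s} · H^{1/s}, using that on the set {g̃ w^ℓ ≥ K}, 1 ≤ (log(g̃ w^ℓ)/log K)^{1/s} and |log(g̃ w^ℓ)| ≤ |log g̃| + (ℓ/2)w². -/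
/-!
On `{K ≤ g̃ w^ℓ}` we have `log K ≤ log (g̃ w^ℓ) ≤ |log g̃| + (ℓ/2) w²`, so there the integrand
`g w^(s-1)` is at most `(g w^s)^((s-1)/s) · (g (|log g̃| + (ℓ/2) w²) / log K)^(1/s)`, and off it the
integrand vanishes. Hölder's inequality with exponents `s/(s-1)` and `s`, in the form
`∫ f^p h^q ≤ (∫ f)^p (∫ h)^q` for `p + q = 1`, bounds the integral of this product by
`M^((s-1)/s) (H / log K)^(1/s)`.
-/

open MeasureTheory

theorem Real.log_mul_rpow_le_abs_log_add {w ℓ : ℝ} (a : ℝ) (hw : 0 < w) (hℓ : 0 ≤ ℓ) :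
    Real.log (a * w ^ ℓ) ≤ |Real.log a| + ℓ / 2 * w ^ 2 := by
  rcases eq_or_ne a 0 with rfl | ha
  · simp only [zero_mul, Real.log_zero, abs_zero, zero_add]
    positivity
  have hlog_w : Real.log w ≤ w ^ 2 / 2 := by
    nlinarith [Real.log_le_sub_one_of_pos hw, sq_nonneg (w - 1)]
  rw [Real.log_mul ha (Real.rpow_pos_of_pos hw ℓ).ne', Real.log_rpow hw]
  nlinarith [le_abs_self (Real.log a), mul_le_mul_of_nonneg_left hlog_w hℓ]

theorem mul_rpow_sub_one_le_rpow_mul_rpow {a w c s : ℝ} (ha : 0 ≤ a) (hw : 0 ≤ w) (hc : 1 ≤ c)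
    (hs : 0 < s) :
    a * w ^ (s - 1) ≤ (a * w ^ s) ^ ((s - 1) / s) * (a * c) ^ (1 / s) := by
  have hsum : (s - 1) / s + 1 / s = 1 := by field_simp; ring
  have hsplit : (a * w ^ s) ^ ((s - 1) / s) * (a * c) ^ (1 / s)
      = a * w ^ (s - 1) * c ^ (1 / s) := by
    rw [Real.mul_rpow ha (Real.rpow_nonneg hw s), Real.mul_rpow ha (by linarith),
      ← Real.rpow_mul hw, mul_div_cancel₀ _ hs.ne']
    calc a ^ ((s - 1) / s) * w ^ (s - 1) * (a ^ (1 / s) * c ^ (1 / s))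
        = a ^ ((s - 1) / s + 1 / s) * w ^ (s - 1) * c ^ (1 / s) := by
          rw [Real.rpow_add' ha (by rw [hsum]; norm_num)]; ring
      _ = a * w ^ (s - 1) * c ^ (1 / s) := by rw [hsum, Real.rpow_one]
  rw [hsplit]
  exact le_mul_of_one_le_right (by positivity) (Real.one_le_rpow hc (by positivity))

theorem ite_mul_rpow_le_rpow_mul_rpow {a b w ℓ K s : ℝ} (ha : 0 ≤ a) (hw : 0 < w) (hℓ : 0 ≤ ℓ)
    (hK : 1 < K) (hs : 1 ≤ s) :
    (if K ≤ b * w ^ ℓ then a * w ^ (s - 1) else 0) ≤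
      (a * w ^ s) ^ ((s - 1) / s) * (a * (|Real.log b| + ℓ / 2 * w ^ 2) / Real.log K) ^ (1 / s) := by
  have hlogK : 0 < Real.log K := Real.log_pos hK
  split_ifs with hb
  · have hratio : 1 ≤ (|Real.log b| + ℓ / 2 * w ^ 2) / Real.log K :=
      (one_le_div hlogK).2 <| (Real.log_le_log (by linarith) hb).trans <|
        Real.log_mul_rpow_le_abs_log_add b hw hℓ
    rw [mul_div_assoc]
    exact mul_rpow_sub_one_le_rpow_mul_rpow ha hw.le hratio (by linarith)
  · positivity

namespace MeasureTheory

variable {α : Type*} [MeasurableSpace α] {μ : Measure α} {f h : α → ℝ} {p q : ℝ}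

theorem Integrable.rpow_mul_rpow (hf : Integrable f μ) (hh : Integrable h μ)
    (hf0 : 0 ≤ᵐ[μ] f) (hh0 : 0 ≤ᵐ[μ] h) (hp : 0 ≤ p) (hq : 0 ≤ q) (hpq : p + q = 1) :
    Integrable (fun a => f a ^ p * h a ^ q) μ := by
  refine Integrable.mono' ((hf.const_mul p).add (hh.const_mul q)) ?_ ?_
  · exact ((hf.1.aemeasurable.pow_const p).mul (hh.1.aemeasurable.pow_const q)).aestronglyMeasurable
  · filter_upwards [hf0, hh0] with a hfa hha
    rw [Real.norm_of_nonneg (mul_nonneg (Real.rpow_nonneg hfa p) (Real.rpow_nonneg hha q))]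
    exact Real.geom_mean_le_arith_mean2_weighted hp hq hfa hha hpq

theorem integral_rpow_mul_rpow_le (hf : Integrable f μ) (hh : Integrable h μ)
    (hf0 : 0 ≤ᵐ[μ] f) (hh0 : 0 ≤ᵐ[μ] h) (hp : 0 ≤ p) (hq : 0 ≤ q) (hpq : p + q = 1) :
    ∫ a, f a ^ p * h a ^ q ∂μ ≤ (∫ a, f a ∂μ) ^ p * (∫ a, h a ∂μ) ^ q := by
  have hprod0 : 0 ≤ᵐ[μ] fun a => f a ^ p * h a ^ q := by
    filter_upwards [hf0, hh0] with a hfa hha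
    exact mul_nonneg (Real.rpow_nonneg hfa p) (Real.rpow_nonneg hha q)
  have hofReal : ∫⁻ a, ENNReal.ofReal (f a ^ p * h a ^ q) ∂μ
      = ∫⁻ a, ENNReal.ofReal (f a) ^ p * ENNReal.ofReal (h a) ^ q ∂μ := by
    refine lintegral_congr_ae ?_
    filter_upwards [hf0, hh0] with a hfa hha
    rw [ENNReal.ofReal_mul (Real.rpow_nonneg hfa p), ENNReal.ofReal_rpow_of_nonneg hfa hp,
      ENNReal.ofReal_rpow_of_nonneg hha hq]
  rw [integral_eq_lintegral_of_nonneg_ae hprod0 (hf.rpow_mul_rpow hh hf0 hh0 hp hq hpq).1,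
    integral_eq_lintegral_of_nonneg_ae hf0 hf.1, integral_eq_lintegral_of_nonneg_ae hh0 hh.1,
    ENNReal.toReal_rpow, ENNReal.toReal_rpow, ← ENNReal.toReal_mul, hofReal]
  refine ENNReal.toReal_mono ?_ (ENNReal.lintegral_mul_norm_pow_le
    hf.1.aemeasurable.ennreal_ofReal hh.1.aemeasurable.ennreal_ofReal hp hq hpq)
  exact ENNReal.mul_ne_top (ENNReal.rpow_ne_top_of_nonneg hp hf.lintegral_lt_top.ne)
    (ENNReal.rpow_ne_top_of_nonneg hq hh.lintegral_lt_top.ne)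

end MeasureTheory

theorem truncation_entropy_estimate_general
    {X : Type*} [MeasurableSpace X] (μ : Measure X)
    (g gt w : X → ℝ) (hg0 : ∀ x, 0 ≤ g x)
    (hw : ∀ x, 1 ≤ w x)
    (k ζ ℓ K : ℝ) (hk : 0 ≤ k) (hζ : 0 < ζ) (hℓ : 0 < ℓ) (hK : 1 < K)
    (s : ℝ) (hs : s = k + ζ + 1)
    (M H : ℝ)
    (hM : M = ∫ x, g x * w x ^ (k + ζ + 1) ∂μ)
    (hH : H = ∫ x, g x * (|Real.log (gt x)| + ℓ / 2 * w x ^ 2) ∂μ)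
    (hMint : Integrable (fun x => g x * w x ^ (k + ζ + 1)) μ)
    (hHint : Integrable (fun x => g x * (|Real.log (gt x)| + ℓ / 2 * w x ^ 2)) μ) :
    (∫ x, (if K ≤ gt x * w x ^ ℓ then g x * w x ^ (k + ζ) else 0) ∂μ)
      ≤ (Real.log K) ^ (-(1 / s)) * M ^ ((s - 1) / s) * H ^ (1 / s) := by
  rw [← hs] at hM hMint
  rw [show k + ζ = s - 1 by linarith]
  have hs1 : 1 ≤ s := by linarith
  have hlogK : 0 < Real.log K := Real.log_pos hK
  have hw0 (x : X) : 0 < w x := zero_lt_one.trans_le (hw x)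
  have hgw0 (x : X) : 0 ≤ g x * w x ^ s := mul_nonneg (hg0 x) (Real.rpow_nonneg (hw0 x).le s)
  have hgA0 (x : X) : 0 ≤ g x * (|Real.log (gt x)| + ℓ / 2 * w x ^ 2) / Real.log K :=
    div_nonneg (mul_nonneg (hg0 x) (by positivity)) hlogK.le
  have hT0 (x : X) : 0 ≤ if K ≤ gt x * w x ^ ℓ then g x * w x ^ (s - 1) else 0 := by
    split_ifs
    exacts [mul_nonneg (hg0 x) (Real.rpow_nonneg (hw0 x).le _), le_rfl]
  have hexp : (s - 1) / s + 1 / s = 1 := by field_simp; ring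
  have hexp0 : 0 ≤ (s - 1) / s := div_nonneg (by linarith) (by linarith)
  have hHint' := hHint.div_const (Real.log K)
  calc (∫ x, (if K ≤ gt x * w x ^ ℓ then g x * w x ^ (s - 1) else 0) ∂μ)
      ≤ ∫ x, (g x * w x ^ s) ^ ((s - 1) / s) *
          (g x * (|Real.log (gt x)| + ℓ / 2 * w x ^ 2) / Real.log K) ^ (1 / s) ∂μ :=
        integral_mono_of_nonneg (.of_forall hT0) (hMint.rpow_mul_rpow hHint' (.of_forall hgw0)
          (.of_forall hgA0) hexp0 (by positivity) hexp)
          (.of_forall fun x => ite_mul_rpow_le_rpow_mul_rpow (hg0 x) (hw0 x) hℓ.le hK hs1)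
    _ ≤ M ^ ((s - 1) / s) * (H / Real.log K) ^ (1 / s) := by
        rw [hM, hH, ← integral_div]
        exact integral_rpow_mul_rpow_le hMint hHint' (.of_forall hgw0) (.of_forall hgA0) hexp0
          (by positivity) hexp
    _ = (Real.log K) ^ (-(1 / s)) * M ^ ((s - 1) / s) * H ^ (1 / s) := by
        have hH0 : 0 ≤ H := hH ▸ integral_nonneg fun x => mul_nonneg (hg0 x) (by positivity)
        rw [Real.div_rpow hH0 hlogK.le, Real.rpow_neg hlogK.le]
        ring

theorem truncation_entropy_estimate
    {X : Type*} [MeasurableSpace X] (μ : Measure X)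
    (g gt w : X → ℝ) (hg0 : ∀ x, 0 ≤ g x) (hgt : ∀ x, 0 < gt x)
    (hw : ∀ x, 1 ≤ w x)
    (k ζ ℓ K : ℝ) (hk : 0 ≤ k) (hζ : 0 < ζ) (hℓ : 0 < ℓ) (hK : 1 < K)
    (s : ℝ) (hs : s = k + ζ + 1)
    (M H : ℝ)
    (hM : M = ∫ x, g x * w x ^ (k + ζ + 1) ∂μ)
    (hH : H = ∫ x, g x * (|Real.log (gt x)| + ℓ / 2 * w x ^ 2) ∂μ)
    (hMint : Integrable (fun x => g x * w x ^ (k + ζ + 1)) μ)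
    (hHint : Integrable (fun x => g x * (|Real.log (gt x)| + ℓ / 2 * w x ^ 2)) μ)
    (hTint : Integrable
      (fun x => if K ≤ gt x * w x ^ ℓ then g x * w x ^ (k + ζ) else 0) μ) :
    (∫ x, (if K ≤ gt x * w x ^ ℓ then g x * w x ^ (k + ζ) else 0) ∂μ)
      ≤ (Real.log K) ^ (-(1 / s)) * M ^ ((s - 1) / s) * H ^ (1 / s) :=
  truncation_entropy_estimate_general μ g gt w hg0 hw k ζ ℓ K hk hζ hℓ hK s hs M H hM hH hMint hHint
end

section
/- (ODE comparison for moment generation) Suppose y : (0,∞) → [0,∞) is differentiable and satisfies y'(t) ≤ −A·y(t)^{1+γ} + B for all t > 0, where A, B > 0 and γ > 0. Then for all t > 0, y(t) ≤ (B/A)^{1/(1+γ)} + (1/(Aγt))^{1/γ}. -/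
/-!
Let `M = (B/A)^(1/(1+γ))`, the equilibrium of `y' = -A y^(1+γ) + B`, and let
`g(t) = (Aγt)^(-1/γ)`, the solution of `g' = -A g^(1+γ)` that blows up at `t = 0`.
By strict superadditivity of `x ↦ x^(1+γ)`, every translate `M + g(· - a)` is a strict
supersolution. Since `g` blows up at `0`, for `0 < s < t` some translate with `a < s` lies above `y`
at time `s`, hence on all of `[s, t]`, so `y t ≤ M + g (t - s)`. Letting `s → 0⁺` gives the bound.
-/

open Real Set Filter Topology

theorem Real.add_rpow_lt_rpow_add {a b p : ℝ} (ha : 0 < a) (hb : 0 < b) (hp : 1 < p) :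
    a ^ p + b ^ p < (a + b) ^ p := by
  have hab : 0 < a + b := add_pos ha hb
  have hlt : ∀ x, 0 < x → x < a + b → x ^ p < x * (a + b) ^ (p - 1) := fun x hx hxab =>
    calc x ^ p = x * x ^ (p - 1) := by rw [mul_comm, ← rpow_add_one hx.ne', sub_add_cancel]
      _ < x * (a + b) ^ (p - 1) := by gcongr
  calc a ^ p + b ^ p < a * (a + b) ^ (p - 1) + b * (a + b) ^ (p - 1) :=
        add_lt_add (hlt a ha (by linarith)) (hlt b hb (by linarith))
    _ = (a + b) ^ p := by rw [← add_mul, mul_comm, ← rpow_add_one hab.ne']; ring_nf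

theorem le_of_subsolution_of_strictSupersolution {F : ℝ → ℝ → ℝ} {y φ φ' : ℝ → ℝ} {a b : ℝ}
    (hy : ∀ x ∈ Icc a b, DifferentiableAt ℝ y x) (hφ : ∀ x ∈ Icc a b, HasDerivAt φ (φ' x) x)
    (hyF : ∀ x ∈ Ico a b, deriv y x ≤ F x (y x)) (hφF : ∀ x ∈ Ico a b, F x (φ x) < φ' x)
    (ha : y a ≤ φ a) : ∀ ⦃x⦄, x ∈ Icc a b → y x ≤ φ x :=
  image_le_of_deriv_right_lt_deriv_boundary' (f' := deriv y)
    (fun x hx => (hy x hx).continuousAt.continuousWithinAt)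
    (fun x hx => (hy x (Ico_subset_Icc_self hx)).hasDerivAt.hasDerivWithinAt) ha
    (fun x hx => (hφ x hx).continuousAt.continuousWithinAt)
    (fun x hx => (hφ x (Ico_subset_Icc_self hx)).hasDerivWithinAt)
    (fun x hx hyφ => (hyF x hx).trans_lt (hyφ ▸ hφF x hx))

noncomputable def blowupSolution (A γ t : ℝ) : ℝ := (A * γ * t) ^ (-(1 / γ))

section BlowupSolution

variable {A γ t : ℝ}

theorem blowupSolution_pos (hA : 0 < A) (hγ : 0 < γ) (ht : 0 < t) : 0 < blowupSolution A γ t :=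
  rpow_pos_of_pos (by positivity) _

theorem blowupSolution_eq (hA : 0 < A) (hγ : 0 < γ) (ht : 0 < t) :
    blowupSolution A γ t = (1 / (A * γ * t)) ^ (1 / γ) := by
  rw [blowupSolution, rpow_neg (by positivity), one_div (A * γ * t), inv_rpow (by positivity)]

theorem hasDerivAt_blowupSolution (hA : 0 < A) (hγ : 0 < γ) (ht : 0 < t) :
    HasDerivAt (blowupSolution A γ) (-A * blowupSolution A γ t ^ (1 + γ)) t := by
  have hAγt : 0 < A * γ * t := by positivity
  have h := ((hasDerivAt_id' t).const_mul (A * γ)).rpow_const (p := -(1 / γ))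
    (Or.inl (by simpa using hAγt.ne'))
  refine h.congr_deriv ?_
  rw [blowupSolution, ← rpow_mul hAγt.le,
    show -(1 / γ) * (1 + γ) = -(1 / γ) - 1 by field_simp; ring]
  field_simp

theorem continuousAt_blowupSolution (hA : 0 < A) (hγ : 0 < γ) (ht : 0 < t) :
    ContinuousAt (blowupSolution A γ) t :=
  (hasDerivAt_blowupSolution hA hγ ht).continuousAt

theorem antitoneOn_blowupSolution (hA : 0 < A) (hγ : 0 < γ) :
    AntitoneOn (blowupSolution A γ) (Ioi 0) := fun s (hs : 0 < s) _ _ hst =>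
  rpow_le_rpow_of_nonpos (by positivity) (by gcongr) (by simp only [neg_nonpos]; positivity)

theorem tendsto_blowupSolution_nhdsGT_zero (hA : 0 < A) (hγ : 0 < γ) :
    Tendsto (blowupSolution A γ) (𝓝[>] 0) atTop := by
  have hAγ : 0 < A * γ := by positivity
  refine (tendsto_rpow_neg_nhdsGT_zero (neg_neg_of_pos (one_div_pos.2 hγ))).comp ?_
  refine tendsto_nhdsWithin_of_tendsto_nhds_of_eventually_within _ ?_ ?_
  · simpa using ((continuous_const_mul (A * γ)).tendsto 0).mono_left nhdsWithin_le_nhds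
  · filter_upwards [self_mem_nhdsWithin] with x hx using mul_pos hAγ hx

end BlowupSolution

section Comparison

variable {A B γ : ℝ} {y : ℝ → ℝ}

theorem equilibrium_add_blowupSolution_strictSupersolution (hA : 0 < A) (hB : 0 < B) (hγ : 0 < γ)
    {u : ℝ} (hu : 0 < u) :
    -A * ((B / A) ^ (1 / (1 + γ)) + blowupSolution A γ u) ^ (1 + γ) + B
      < -A * blowupSolution A γ u ^ (1 + γ) := by
  have hsuper := add_rpow_lt_rpow_add (rpow_pos_of_pos (div_pos hB hA) (1 / (1 + γ)))
    (blowupSolution_pos hA hγ hu) (lt_add_of_pos_right 1 hγ)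
  have hM : A * ((B / A) ^ (1 / (1 + γ))) ^ (1 + γ) = B := by
    rw [one_div, rpow_inv_rpow (by positivity) (by positivity), mul_div_cancel₀ _ hA.ne']
  nlinarith

theorem le_equilibrium_add_blowupSolution_sub (hA : 0 < A) (hB : 0 < B) (hγ : 0 < γ)
    (hdiff : ∀ t, 0 < t → DifferentiableAt ℝ y t)
    (hode : ∀ t, 0 < t → deriv y t ≤ -A * y t ^ (1 + γ) + B)
    {s t : ℝ} (hs : 0 < s) (hst : s < t) :
    y t ≤ (B / A) ^ (1 / (1 + γ)) + blowupSolution A γ (t - s) := by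
  set M := (B / A) ^ (1 / (1 + γ))
  obtain ⟨u, hyu, hu : 0 < u⟩ := (((tendsto_blowupSolution_nhdsGT_zero hA hγ).eventually_ge_atTop
    (y s - M)).and self_mem_nhdsWithin).exists
  have hcomp := le_of_subsolution_of_strictSupersolution (F := fun _ v => -A * v ^ (1 + γ) + B)
    (φ := fun x => M + blowupSolution A γ (x - (s - u))) (a := s) (b := t)
    (fun x hx => hdiff x (hs.trans_le hx.1))
    (fun x hx => ((hasDerivAt_blowupSolution hA hγ (by linarith [hx.1])).comp x
      ((hasDerivAt_id' x).sub_const (s - u))).const_add M)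
    (fun x hx => hode x (hs.trans_le hx.1))
    (fun x hx => (mul_one (-A * blowupSolution A γ (x - (s - u)) ^ (1 + γ))).symm ▸
      equilibrium_add_blowupSolution_strictSupersolution hA hB hγ (by linarith [hx.1]))
    (by simp only [sub_sub_cancel]; linarith)
    (right_mem_Icc.2 hst.le)
  calc y t ≤ M + blowupSolution A γ (t - (s - u)) := hcomp
    _ ≤ M + blowupSolution A γ (t - s) := by
      gcongr 1
      exact antitoneOn_blowupSolution hA hγ (sub_pos.2 hst) (show 0 < t - (s - u) by linarith)
        (by linarith)

end Comparison

theorem ode_comparison_generation_general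
    (A B γ : ℝ) (hA : 0 < A) (hB : 0 < B) (hγ : 0 < γ)
    (y : ℝ → ℝ)
    (hdiff : ∀ t, 0 < t → DifferentiableAt ℝ y t)
    (hode : ∀ t, 0 < t → deriv y t ≤ -A * y t ^ (1 + γ) + B) :
    ∀ t, 0 < t → y t ≤ (B / A) ^ (1 / (1 + γ)) + (1 / (A * γ * t)) ^ (1 / γ) := by
  intro t ht
  have hshift : Tendsto (fun s => t - s) (𝓝[>] 0) (𝓝 t) := by
    simpa using ((continuous_sub_left t).tendsto 0).mono_left nhdsWithin_le_nhds
  have hlim := ((continuousAt_blowupSolution hA hγ ht).tendsto.comp hshift).const_add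
    ((B / A) ^ (1 / (1 + γ)))
  rw [← blowupSolution_eq hA hγ ht]
  refine ge_of_tendsto hlim ?_
  filter_upwards [Ioo_mem_nhdsGT ht] with s hs
  exact le_equilibrium_add_blowupSolution_sub hA hB hγ hdiff hode hs.1 hs.2

theorem ode_comparison_generation
    (A B γ : ℝ) (hA : 0 < A) (hB : 0 < B) (hγ : 0 < γ)
    (y : ℝ → ℝ) (hy0 : ∀ t, 0 < t → 0 ≤ y t)
    (hdiff : ∀ t, 0 < t → DifferentiableAt ℝ y t)
    (hode : ∀ t, 0 < t → deriv y t ≤ -A * y t ^ (1 + γ) + B) :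
    ∀ t, 0 < t → y t ≤ (B / A) ^ (1 / (1 + γ)) + (1 / (A * γ * t)) ^ (1 / γ) :=
  ode_comparison_generation_general A B γ hA hB hγ y hdiff hode
end
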